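/- For any CPTP map Φ on an N-dimensional system, the Shannon entropy of the normalized singular values of the superoperator satisfies S^rec(Φ) ≤ ((Λ−1)/Λ) ln((N²−1)/(Λ−1)) + ln Λ ≤ 2 ln N, where Λ is the trace norm of the superoperator. -/

import Mathlib

open Matrix
open scoped BigOperators Kronecker ComplexOrder

noncomputable section

/-- Singular values of a square complex matrix: square roots of eigenvalues of `X * Xᴴ`. -/
def singularValues {n : Type*} [Fintype n] [DecidableEq n] (X : Matrix n n ℂ) : n → ℝ :=
  fun i => Real.sqrt ((Matrix.posSemidef_self_mul_conjTranspose X).1.eigenvalues i)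

/-- Shannon entropy of the normalization of a nonnegative vector. -/
def shannonH {ι : Type*} [Fintype ι] (v : ι → ℝ) : ℝ :=
  -∑ i, (v i / ∑ j, v j) * Real.log (v i / ∑ j, v j)

/-- Rényi entropy of order `q` of the normalization of a nonnegative vector. -/
def renyiH {ι : Type*} [Fintype ι] (q : ℝ) (v : ι → ℝ) : ℝ :=
  (1 / (1 - q)) * Real.log (∑ i, (v i / ∑ j, v j) ^ q)

/-- Unnormalized (von Neumann–type) entropy of the singular value vector. -/
def vnEntropy {n : Type*} [Fintype n] [DecidableEq n] (M : Matrix n n ℂ) : ℝ :=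
  -∑ i, singularValues M i * Real.log (singularValues M i)

/-- A quantum channel: completely positive (Kraus form) and trace preserving. -/
def IsCPTP {N : ℕ} (Φ : Matrix (Fin N) (Fin N) ℂ →ₗ[ℂ] Matrix (Fin N) (Fin N) ℂ) : Prop :=
  ∃ (k : ℕ) (A : Fin k → Matrix (Fin N) (Fin N) ℂ),
    (∀ ρ, Φ ρ = ∑ i, A i * ρ * (A i)ᴴ) ∧ (∑ i, (A i)ᴴ * A i = 1)

/-- Density matrix predicate. -/
def IsDensityMatrix {n : Type*} [Fintype n] [DecidableEq n] (ρ : Matrix n n ℂ) : Prop :=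
  ρ.PosSemidef ∧ ρ.trace = 1

/-- The Choi (dynamical) matrix of a linear map on matrices. -/
def choiMatrix {N : ℕ} (Φ : Matrix (Fin N) (Fin N) ℂ →ₗ[ℂ] Matrix (Fin N) (Fin N) ℂ) :
    Matrix (Fin N × Fin N) (Fin N × Fin N) ℂ :=
  fun p q => Φ (Matrix.single p.2 q.2 1) p.1 q.1

/-- The superoperator matrix of a linear map on matrices. -/
def superMatrix {N : ℕ} (Φ : Matrix (Fin N) (Fin N) ℂ →ₗ[ℂ] Matrix (Fin N) (Fin N) ℂ) :
    Matrix (Fin N × Fin N) (Fin N × Fin N) ℂ :=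
  fun p q => Φ (Matrix.single q.1 q.2 1) p.1 p.2

/-- Hilbert–Schmidt norm of a matrix. -/
def hsNorm {n : Type*} [Fintype n] [DecidableEq n] (M : Matrix n n ℂ) : ℝ :=
  Real.sqrt ((M * Mᴴ).trace.re)

/-- Largest singular value of the superoperator of `Φ`, as the operator norm w.r.t. HS norm. -/
def sigma1 {N : ℕ} (Φ : Matrix (Fin N) (Fin N) ℂ →ₗ[ℂ] Matrix (Fin N) (Fin N) ℂ) : ℝ :=
  sSup {r : ℝ | ∃ M : Matrix (Fin N) (Fin N) ℂ, hsNorm M = 1 ∧ r = hsNorm (Φ M)}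

/-- Sum of the (at most) `m` largest entries of a nonnegative vector. -/
def partialMax {ι : Type*} [Fintype ι] (v : ι → ℝ) (m : ℕ) : ℝ :=
  sSup {t : ℝ | ∃ s : Finset ι, s.card ≤ m ∧ t = ∑ i ∈ s, v i}

/-- `Majorizes w v` means `v ≺ w` (for nonnegative vectors, possibly of different lengths). -/
def Majorizes {ι κ : Type*} [Fintype ι] [Fintype κ] (w : ι → ℝ) (v : κ → ℝ) : Prop :=
  (∑ i, v i = ∑ i, w i) ∧ ∀ m : ℕ, partialMax v m ≤ partialMax w m

/-!
Trace preservation makes `vec 1` a left fixed vector of the superoperator matrix `S`, so some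
singular value `σⱼ` is at least `1`. The Choi matrix `C` is a reshuffling of `S`, hence has the
same Frobenius norm, and writing `C = B Bᴴ` with `B` built from the Kraus operators gives
`‖C‖ ≤ ‖B‖² = N`. Since `∑ σᵢ² = ‖S‖²`, Cauchy–Schwarz gives `Λ = ∑ σᵢ ≤ √(N²) ‖S‖ ≤ N²`.

For a distribution `p` on `q` points, Jensen's inequality applied to the points other than `j`
bounds its entropy by the `q`-ary entropy `h_q (1 - p j)`. For `p = σ / Λ` and `q = N²` we have
`1/q ≤ 1/Λ ≤ p j`, and `h_q` increases on `[0, 1 - 1/q]`, so the entropy is at most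
`h_q (1 - 1/Λ)`, which is exactly the stated bound. Its largest value is
`h_q (1 - 1/q) = log q = 2 log N`.
-/

open Real
open scoped Matrix.Norms.Frobenius

namespace Real

theorem sum_negMulLog_le {ι : Type*} (s : Finset ι) {f : ι → ℝ} (hf : ∀ i ∈ s, 0 ≤ f i) :
    ∑ i ∈ s, negMulLog (f i) ≤ negMulLog (∑ i ∈ s, f i) + (∑ i ∈ s, f i) * log s.card := by
  rcases s.eq_empty_or_nonempty with rfl | hs
  · simp
  have hcard : (0 : ℝ) < s.card := by exact_mod_cast hs.card_pos
  have jensen := concaveOn_negMulLog.le_map_sum (t := s) (w := fun _ => (s.card : ℝ)⁻¹) (p := f)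
    (fun _ _ => by positivity) (by simp [hcard.ne']) hf
  simp only [smul_eq_mul, ← Finset.mul_sum] at jensen
  rw [mul_comm, negMulLog_mul, negMulLog, log_inv] at jensen
  have hscaled := mul_le_mul_of_nonneg_left jensen hcard.le
  field_simp at hscaled
  linarith

theorem sum_negMulLog_le_qaryEntropy {ι : Type*} [Fintype ι] [DecidableEq ι] {p : ι → ℝ}
    (hp : ∀ i, 0 ≤ p i) (hsum : ∑ i, p i = 1) (j : ι) :
    ∑ i, negMulLog (p i) ≤ qaryEntropy (Fintype.card ι) (1 - p j) := by
  have hrest : ∑ i ∈ Finset.univ.erase j, p i = 1 - p j := by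
    rw [← hsum, ← Finset.add_sum_erase _ _ (Finset.mem_univ j)]; ring
  have hcard : ((Finset.univ.erase j).card : ℝ) = (Fintype.card ι : ℝ) - 1 := by
    rw [Finset.card_erase_of_mem (Finset.mem_univ j), Finset.card_univ,
      Nat.cast_sub (Fintype.card_pos_iff.2 ⟨j⟩)]
    simp
  have hjensen := sum_negMulLog_le (Finset.univ.erase j) (fun i _ => hp i)
  rw [hrest, hcard] at hjensen
  rw [← Finset.add_sum_erase _ _ (Finset.mem_univ j), qaryEntropy, binEntropy_one_sub,
    binEntropy_eq_negMulLog_add_negMulLog_one_sub]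
  push_cast
  linarith

theorem qaryEntropy_one_sub_inv {q : ℕ} {Λ : ℝ} (h1 : 1 ≤ Λ) (hΛq : Λ ≤ q) :
    qaryEntropy q (1 - Λ⁻¹) = (Λ - 1) / Λ * log ((q - 1) / (Λ - 1)) + log Λ := by
  rcases h1.eq_or_lt with rfl | h1
  · simp
  have hΛ : 0 < Λ - 1 := by linarith
  have hq : 0 < (q : ℝ) - 1 := by linarith
  have h1Λ : 1 - Λ⁻¹ = (Λ - 1) / Λ := by field_simp
  rw [qaryEntropy, ← binEntropy_one_sub, sub_sub_cancel, binEntropy, inv_inv, h1Λ, inv_div,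
    log_div hq.ne' hΛ.ne', log_div (by positivity) hΛ.ne']
  push_cast
  field_simp
  ring

theorem qaryEntropy_le_log {q : ℕ} (hq : 0 < q) {p : ℝ} (hp₀ : 0 ≤ p)
    (hp : p ≤ 1 - (q : ℝ)⁻¹) : qaryEntropy q p ≤ log q := by
  rcases (Nat.one_le_iff_ne_zero.2 hq.ne').eq_or_lt with rfl | hq2
  · simp [le_antisymm (by simpa using hp) hp₀]
  have hq1 : (1 : ℝ) < q := by exact_mod_cast hq2
  have hmono := (qaryEntropy_strictMonoOn (q := q) hq2).monotoneOn
  calc qaryEntropy q p ≤ qaryEntropy q (1 - (q : ℝ)⁻¹) :=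
        hmono ⟨hp₀, by simpa using hp⟩ ⟨by simpa using inv_le_one_of_one_le₀ hq1.le, by simp⟩ hp
    _ = log q := by
        rw [qaryEntropy_one_sub_inv hq1.le le_rfl, div_self (by linarith)]
        simp

end Real

theorem shannonH_eq_sum_negMulLog {ι : Type*} [Fintype ι] (v : ι → ℝ) :
    shannonH v = ∑ i, negMulLog (v i / ∑ j, v j) := by
  simp only [shannonH, negMulLog, neg_mul, Finset.sum_neg_distrib]

theorem shannonH_le_qaryEntropy {ι : Type*} [Fintype ι] [DecidableEq ι] {σ : ι → ℝ}
    (hσ : ∀ i, 0 ≤ σ i) {j : ι} (hj : 1 ≤ σ j) (hΛ : ∑ i, σ i ≤ Fintype.card ι) :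
    shannonH σ ≤ qaryEntropy (Fintype.card ι) (1 - (∑ i, σ i)⁻¹) := by
  set Λ := ∑ i, σ i
  have hΛ1 : 1 ≤ Λ := hj.trans (Finset.single_le_sum (fun i _ => hσ i) (Finset.mem_univ j))
  have hΛ0 : 0 < Λ := by linarith
  have hp : ∀ i, 0 ≤ σ i / Λ := fun i => div_nonneg (hσ i) hΛ0.le
  have hpsum : ∑ i, σ i / Λ = 1 := by rw [← Finset.sum_div, div_self hΛ0.ne']
  have hpj : σ j / Λ ≤ 1 := hpsum ▸ Finset.single_le_sum (fun i _ => hp i) (Finset.mem_univ j)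
  have hpj' : Λ⁻¹ ≤ σ j / Λ := by rw [inv_eq_one_div]; gcongr
  rw [shannonH_eq_sum_negMulLog]
  refine (sum_negMulLog_le_qaryEntropy hp hpsum j).trans ?_
  rcases hΛ1.eq_or_lt with hΛ1 | hΛ1
  · rw [le_antisymm (hpj.trans_eq (by rw [← hΛ1, inv_one])) hpj']
  have hq : 2 ≤ Fintype.card ι := by exact_mod_cast (hΛ1.trans_le hΛ)
  have hinv : 1 / (Fintype.card ι : ℝ) ≤ Λ⁻¹ := by rw [one_div]; gcongr
  have hΛinv : Λ⁻¹ ≤ 1 := inv_le_one_of_one_le₀ hΛ1.le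
  exact (qaryEntropy_strictMonoOn hq).monotoneOn ⟨by linarith, by linarith⟩
    ⟨by linarith, by linarith⟩ (by linarith)

namespace Matrix

section Frobenius

variable {𝕜 m n : Type*} [RCLike 𝕜] [Fintype m] [Fintype n]

theorem frobenius_norm_sq (A : Matrix m n 𝕜) : ‖A‖ ^ 2 = ∑ i, ∑ j, ‖A i j‖ ^ 2 := by
  rw [frobenius_norm_def, ← Real.rpow_natCast, ← Real.rpow_mul (by positivity)]
  norm_num

theorem re_trace_mul_conjTranspose (A : Matrix m n 𝕜) :
    RCLike.re (A * Aᴴ).trace = ‖A‖ ^ 2 := by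
  simp [frobenius_norm_sq, trace, mul_apply, RCLike.mul_conj]

end Frobenius

theorem IsHermitian.re_dotProduct_mulVec_le {𝕜 n : Type*} [RCLike 𝕜] [Fintype n] [DecidableEq n]
    {A : Matrix n n 𝕜} (hA : A.IsHermitian) {c : ℝ}
    (hc : ∀ i, hA.eigenvalues i ≤ c) (v : n → 𝕜) :
    RCLike.re (star v ⬝ᵥ (A *ᵥ v)) ≤ c * RCLike.re (star v ⬝ᵥ v) := by
  set U : Matrix n n 𝕜 := (hA.eigenvectorUnitary : Matrix n n 𝕜)
  have hUU : U * star U = 1 := Unitary.mul_star_self_of_mem hA.eigenvectorUnitary.2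
  have hdiff :
      (c : 𝕜) • 1 - A = U * diagonal (fun i => ((c - hA.eigenvalues i : ℝ) : 𝕜)) * Uᴴ := by
    have hdiag : diagonal (fun i => ((c - hA.eigenvalues i : ℝ) : 𝕜))
        = (c : 𝕜) • 1 - diagonal (RCLike.ofReal ∘ hA.eigenvalues) := by
      ext i j
      by_cases h : i = j <;> simp [h, Algebra.algebraMap_eq_smul_one, sub_smul]
    conv_lhs => rw [hA.spectral_theorem, Unitary.conjStarAlgAut_apply]
    rw [hdiag, mul_sub, sub_mul, mul_smul_comm, mul_one, smul_mul_assoc, ← star_eq_conjTranspose,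
      hUU]
  have hpsd : ((c : 𝕜) • 1 - A).PosSemidef := by
    rw [hdiff]
    refine PosSemidef.mul_mul_conjTranspose_same ?_ U
    exact posSemidef_diagonal_iff.2 fun i => RCLike.ofReal_nonneg.2 (sub_nonneg.2 (hc i))
  have hnonneg := hpsd.re_dotProduct_nonneg v
  rw [sub_mulVec, smul_mulVec, one_mulVec, dotProduct_sub, dotProduct_smul, map_sub, smul_eq_mul,
    RCLike.re_ofReal_mul] at hnonneg
  linarith

end Matrix

section SingularValues

variable {n : Type*} [Fintype n] [DecidableEq n]

theorem singularValues_nonneg (X : Matrix n n ℂ) (i : n) : 0 ≤ singularValues X i :=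
  Real.sqrt_nonneg _

theorem sum_sq_singularValues (X : Matrix n n ℂ) : ∑ i, singularValues X i ^ 2 = ‖X‖ ^ 2 := by
  have hX := posSemidef_self_mul_conjTranspose X
  simp only [singularValues, Real.sq_sqrt (hX.eigenvalues_nonneg _)]
  rw [← re_trace_mul_conjTranspose, hX.1.trace_eq_sum_eigenvalues, map_sum]
  simp

theorem sum_singularValues_le (X : Matrix n n ℂ) :
    ∑ i, singularValues X i ≤ √(Fintype.card n) * ‖X‖ := by
  rw [← Real.sqrt_sq (norm_nonneg X), ← Real.sqrt_mul (by positivity), ← sum_sq_singularValues]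
  apply Real.le_sqrt_of_sq_le
  simpa using sq_sum_le_card_mul_sum_sq (s := Finset.univ) (f := singularValues X)

theorem exists_one_le_singularValues {X : Matrix n n ℂ} {v : n → ℂ} (hv : v ≠ 0)
    (hX : v ᵥ* X = v) : ∃ i, 1 ≤ singularValues X i := by
  have hH := (posSemidef_self_mul_conjTranspose X).1
  obtain ⟨k, -⟩ := Function.ne_iff.1 hv
  obtain ⟨j, -, hj⟩ := Finset.exists_max_image Finset.univ hH.eigenvalues ⟨k, Finset.mem_univ k⟩
  have hXv : Xᴴ *ᵥ star v = star v := by rw [← star_vecMul, hX]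
  have hquad : star (star v) ⬝ᵥ ((X * Xᴴ) *ᵥ star v) = star (star v) ⬝ᵥ star v := by
    rw [star_star, ← mulVec_mulVec, dotProduct_mulVec, hX, hXv]
  have hpos : 0 < RCLike.re (star (star v) ⬝ᵥ star v) :=
    (RCLike.pos_iff.1 (dotProduct_star_self_pos_iff.2 (star_ne_zero.2 hv))).1
  have hrayleigh := hH.re_dotProduct_mulVec_le (fun i => hj i (Finset.mem_univ i)) (star v)
  rw [hquad] at hrayleigh
  exact ⟨j, Real.one_le_sqrt.2 (le_of_mul_le_mul_right (by linarith) hpos)⟩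

end SingularValues

section Channel

variable {N : ℕ} {Φ : Matrix (Fin N) (Fin N) ℂ →ₗ[ℂ] Matrix (Fin N) (Fin N) ℂ}

theorem norm_superMatrix_eq_norm_choiMatrix : ‖superMatrix Φ‖ = ‖choiMatrix Φ‖ := by
  rw [frobenius_norm_def, frobenius_norm_def, ← Fintype.sum_prod_type', ← Fintype.sum_prod_type']
  congr 1
  exact Fintype.sum_equiv (Equiv.prodProdProdComm _ _ _ _) _ _ fun _ => rfl

theorem choiMatrix_eq_of_kraus {k : ℕ} {A : Fin k → Matrix (Fin N) (Fin N) ℂ}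
    (hA : ∀ ρ, Φ ρ = ∑ i, A i * ρ * (A i)ᴴ) :
    choiMatrix Φ = of (fun p i => A i p.1 p.2) * (of fun p i => A i p.1 p.2)ᴴ := by
  ext p q
  simp [choiMatrix, hA, mul_apply, Matrix.sum_apply, single_apply, ite_and]

namespace IsCPTP

theorem trace_map (hΦ : IsCPTP Φ) (ρ : Matrix (Fin N) (Fin N) ℂ) : (Φ ρ).trace = ρ.trace := by
  obtain ⟨k, A, hA, hTP⟩ := hΦ
  simp_rw [hA, trace_sum, trace_mul_cycle _ ρ, ← trace_sum, ← Finset.sum_mul, hTP, one_mul]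

theorem vecMul_superMatrix (hΦ : IsCPTP Φ) : vec 1 ᵥ* superMatrix Φ = vec 1 := by
  ext ⟨i, j⟩
  have htr : (Φ (single i j 1)).trace = (1 : Matrix (Fin N) (Fin N) ℂ) j i := by
    rw [hΦ.trace_map]
    by_cases h : i = j
    · subst h; simp
    · simp [trace_single_eq_of_ne _ _ _ h, one_apply_ne (Ne.symm h)]
  simpa [vecMul, dotProduct, Fintype.sum_prod_type, vec, superMatrix, one_apply, trace] using htr

theorem norm_choiMatrix_le (hΦ : IsCPTP Φ) : ‖choiMatrix Φ‖ ≤ N := by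
  obtain ⟨k, A, hA, hTP⟩ := hΦ
  set B : Matrix (Fin N × Fin N) (Fin k) ℂ := of fun p i => A i p.1 p.2
  have hB : ‖B‖ ^ 2 = N := by
    calc ‖B‖ ^ 2 = ∑ i, ‖(A i)ᴴ‖ ^ 2 := by
          simp only [frobenius_norm_conjTranspose, frobenius_norm_sq, B, of_apply]
          rw [Finset.sum_comm]
          simp only [Fintype.sum_prod_type]
      _ = RCLike.re (∑ i, (A i)ᴴ * A i).trace := by
          simp only [← re_trace_mul_conjTranspose, conjTranspose_conjTranspose, trace_sum, map_sum]
      _ = N := by simp [hTP]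
  calc ‖choiMatrix Φ‖ = ‖B * Bᴴ‖ := by rw [choiMatrix_eq_of_kraus hA]
    _ ≤ ‖B‖ * ‖Bᴴ‖ := frobenius_norm_mul _ _
    _ = N := by rw [frobenius_norm_conjTranspose, ← sq, hB]

end IsCPTP

end Channel

theorem receiver_entropy_upper_bound {N : ℕ} (hN : 0 < N)
    (Φ : Matrix (Fin N) (Fin N) ℂ →ₗ[ℂ] Matrix (Fin N) (Fin N) ℂ) (hΦ : IsCPTP Φ) :
    shannonH (singularValues (superMatrix Φ))
        ≤ (((∑ i, singularValues (superMatrix Φ) i) - 1) /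
              (∑ i, singularValues (superMatrix Φ) i)) *
            Real.log (((N : ℝ) ^ 2 - 1) / ((∑ i, singularValues (superMatrix Φ) i) - 1))
          + Real.log (∑ i, singularValues (superMatrix Φ) i) ∧
    (((∑ i, singularValues (superMatrix Φ) i) - 1) /
          (∑ i, singularValues (superMatrix Φ) i)) *
        Real.log (((N : ℝ) ^ 2 - 1) / ((∑ i, singularValues (superMatrix Φ) i) - 1))
      + Real.log (∑ i, singularValues (superMatrix Φ) i) ≤ 2 * Real.log N := by
  set σ := singularValues (superMatrix Φ)
  set q := Fintype.card (Fin N × Fin N)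
  have hq : (q : ℝ) = (N : ℝ) ^ 2 := by simp [q, sq]
  have : Nonempty (Fin N) := ⟨⟨0, hN⟩⟩
  obtain ⟨j, hj⟩ := exists_one_le_singularValues (vec_eq_zero_iff.not.2 one_ne_zero)
    hΦ.vecMul_superMatrix
  have hΛ1 : 1 ≤ ∑ i, σ i :=
    hj.trans (Finset.single_le_sum (fun i _ => singularValues_nonneg _ i) (Finset.mem_univ j))
  have hΛq : ∑ i, σ i ≤ q := calc
    ∑ i, σ i ≤ √q * ‖superMatrix Φ‖ := sum_singularValues_le _
    _ ≤ √q * N := by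
      rw [norm_superMatrix_eq_norm_choiMatrix]
      gcongr
      exact hΦ.norm_choiMatrix_le
    _ = q := by rw [hq, Real.sqrt_sq (Nat.cast_nonneg N), sq]
  rw [← hq, ← qaryEntropy_one_sub_inv hΛ1 hΛq]
  refine ⟨shannonH_le_qaryEntropy (singularValues_nonneg _) hj hΛq, ?_⟩
  calc qaryEntropy q (1 - (∑ i, σ i)⁻¹) ≤ Real.log q :=
        qaryEntropy_le_log Fintype.card_pos (by simpa using inv_le_one_of_one_le₀ hΛ1)
          (by gcongr)
    _ = 2 * Real.log N := by rw [hq, Real.log_pow, Nat.cast_ofNat]
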